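/- Suppose (ρ_l)_{l∈ℕ^S} is a family of nonnegative real numbers such that Σ_{l∈ℕ^S} ρ_l v^l = ρ(v) for every v with all coordinates v_k ∈ [0,1). Then the family (ρ_l) is summable with Σ_{l∈ℕ^S} ρ_l = ρ; consequently the numbers ρ^{-1} ρ_l (when ρ > 0) are nonnegative and sum to 1, i.e., they form a probability distribution on ℕ^S. -/

import Mathlib

/-!
Restricting to constant families `v ≡ t` turns the hypothesis into the identity
`∑ ρ_l t^|l| = ρ(t)`, where `ρ(t)` is the least root in `[0,1]` of `B(u) - (1 - t) P(u)` with
`P(u) = ∑_{k ∈ S} b_k u^k`. That function is `≥ 0` at `0` and `≤ 0` at `ρ`, so the intermediate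
value theorem gives `ρ(t) ≤ ρ`. Hence the partial sums of `(ρ_l)` are at most `ρ`, the family is
summable with some sum `T ≤ ρ`, and by dominated convergence `ρ(t) → T` as `t → 1⁻`. Passing to
the limit in `B(ρ(t)) = (1 - t) P(ρ(t))` gives `B(T) = 0`, so `ρ ≤ T` by minimality of `ρ`.
-/

open Filter Topology Set

section PowerSeries

variable {b : ℕ → ℝ}

lemma summable_mul_pow_of_abs_le_one (hb : Summable b) {u : ℝ} (hu : |u| ≤ 1) :
    Summable fun j => b j * u ^ j :=
  hb.abs.of_norm_bounded fun j => by
    simpa [abs_mul, abs_pow] using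
      mul_le_of_le_one_right (abs_nonneg (b j)) (pow_le_one₀ (abs_nonneg u) hu)

lemma continuousOn_tsum_mul_pow (hb : Summable b) :
    ContinuousOn (fun u : ℝ => ∑' j, b j * u ^ j) (Icc (-1) 1) :=
  continuousOn_tsum (fun j => by fun_prop) hb.abs fun j u hu => by
    simpa [abs_mul, abs_pow] using mul_le_of_le_one_right (abs_nonneg (b j))
      (pow_le_one₀ (abs_nonneg u) (abs_le.2 hu))

lemma tsum_mul_zero_pow (b : ℕ → ℝ) : ∑' j, b j * (0 : ℝ) ^ j = b 0 := by
  rw [tsum_eq_single 0 fun j hj => by simp [hj]]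
  simp

end PowerSeries

lemma tsum_ite_mem_finset {ι α : Type*} [DecidableEq ι] [AddCommGroup α] [TopologicalSpace α]
    [IsTopologicalAddGroup α] [T2Space α] {f : ι → α} (hf : Summable f) (S : Finset ι)
    (g : ι → α) :
    ∑' j, (if j ∈ S then g j else f j) = ∑' j, f j + ∑ j ∈ S, (g j - f j) := by
  have hfin : Summable fun j => if j ∈ S then g j - f j else 0 :=
    summable_of_ne_finset_zero fun j hj => if_neg hj
  calc ∑' j, (if j ∈ S then g j else f j)
      = ∑' j, (f j + if j ∈ S then g j - f j else 0) :=
        tsum_congr fun j => by split_ifs <;> abel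
    _ = ∑' j, f j + ∑ j ∈ S, (g j - f j) := by
        rw [hf.tsum_add hfin, tsum_eq_sum fun j hj => if_neg hj]
        exact congrArg _ (Finset.sum_congr rfl fun j hj => if_pos hj)

lemma tsum_ite_mem_mul_pow {b : ℕ → ℝ} (hb : Summable b) (S : Finset ℕ) (t : ℝ) {u : ℝ}
    (hu : |u| ≤ 1) :
    ∑' j, (if j ∈ S then b j * t * u ^ j else b j * u ^ j)
      = ∑' j, b j * u ^ j - (1 - t) * ∑ k ∈ S, b k * u ^ k := by
  rw [tsum_ite_mem_finset (summable_mul_pow_of_abs_le_one hb hu), Finset.mul_sum,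
    sub_eq_add_neg, ← Finset.sum_neg_distrib]
  exact congrArg _ (Finset.sum_congr rfl fun k _ => by ring)

lemma le_of_isLeast_zero_of_sign_change {f : ℝ → ℝ} {a r : ℝ} (ha : a ∈ Icc (0 : ℝ) 1)
    (hf : ContinuousOn f (Icc 0 a)) (h0 : 0 ≤ f 0) (hfa : f a ≤ 0)
    (hr : IsLeast {u ∈ Icc (0 : ℝ) 1 | f u = 0} r) : r ≤ a := by
  obtain ⟨u, hu, hfu⟩ := intermediate_value_Icc' ha.1 hf ⟨hfa, h0⟩
  exact (hr.2 ⟨⟨hu.1, hu.2.trans ha.2⟩, hfu⟩).trans hu.2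

section AbelLimit

variable {ι : Type*} {a : ι → ℝ} {n : ι → ℕ} {R : ℝ → ℝ}

lemma summable_of_hasSum_mul_pow_le (ha : 0 ≤ a)
    (hR : ∀ t ∈ Ico (0 : ℝ) 1, HasSum (fun i => a i * t ^ n i) (R t)) {M : ℝ}
    (hM : ∀ t ∈ Ico (0 : ℝ) 1, R t ≤ M) : Summable a := by
  refine summable_of_sum_le (c := M) ha fun F => ?_
  have hlim : Tendsto (fun t : ℝ => ∑ i ∈ F, a i * t ^ n i) (𝓝[<] 1) (𝓝 (∑ i ∈ F, a i)) := by
    have hcont : Continuous fun t : ℝ => ∑ i ∈ F, a i * t ^ n i := by fun_prop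
    simpa using (hcont.tendsto 1).mono_left nhdsWithin_le_nhds
  refine le_of_tendsto hlim <| mem_of_superset (Ico_mem_nhdsLT zero_lt_one) fun t ht => ?_
  exact (sum_le_hasSum F (fun i _ => mul_nonneg (ha i) (pow_nonneg ht.1 _)) (hR t ht)).trans
    (hM t ht)

lemma tendsto_nhdsLT_one_of_hasSum_mul_pow (ha : 0 ≤ a) (hs : Summable a)
    (hR : ∀ t ∈ Ico (0 : ℝ) 1, HasSum (fun i => a i * t ^ n i) (R t)) :
    Tendsto R (𝓝[<] 1) (𝓝 (∑' i, a i)) := by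
  have hIco : Ico (0 : ℝ) 1 ∈ 𝓝[<] 1 := Ico_mem_nhdsLT zero_lt_one
  refine Tendsto.congr' (mem_of_superset hIco fun t ht => (hR t ht).tsum_eq) ?_
  refine tendsto_tsum_of_dominated_convergence hs (fun i => ?_) ?_
  · have hcont : Continuous fun t : ℝ => a i * t ^ n i := by fun_prop
    simpa using (hcont.tendsto 1).mono_left nhdsWithin_le_nhds
  · refine mem_of_superset hIco fun t ht i => ?_
    rw [Real.norm_eq_abs, abs_of_nonneg (mul_nonneg (ha i) (pow_nonneg ht.1 _))]
    exact mul_le_of_le_one_right (ha i) (pow_le_one₀ ht.1 ht.2.le)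

end AbelLimit

section PerturbedRoot

variable {b : ℕ → ℝ} {S : Finset ℕ}

lemma le_of_isLeast_sub_mul_sum (hb : Summable b) (hb0 : 0 ≤ b 0) (hbS : ∀ k ∈ S, 0 ≤ b k)
    {ρ : ℝ} (hρ : ρ ∈ Icc (0 : ℝ) 1) (hBρ : ∑' j, b j * ρ ^ j = 0) {t r : ℝ}
    (ht : t ∈ Icc (0 : ℝ) 1)
    (hr : IsLeast {u ∈ Icc (0 : ℝ) 1 |
      ∑' j, b j * u ^ j - (1 - t) * ∑ k ∈ S, b k * u ^ k = 0} r) : r ≤ ρ := by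
  have hP : ∀ u ∈ Icc (0 : ℝ) 1, 0 ≤ ∑ k ∈ S, b k * u ^ k := fun u hu =>
    Finset.sum_nonneg fun k hk => mul_nonneg (hbS k hk) (pow_nonneg hu.1 k)
  refine le_of_isLeast_zero_of_sign_change hρ ?_ ?_ ?_ hr
  · exact ((continuousOn_tsum_mul_pow hb).mono (Icc_subset_Icc (by norm_num) hρ.2)).sub
      (by fun_prop)
  · have hP0 : ∑ k ∈ S, b k * (0 : ℝ) ^ k ≤ b 0 := by
      simp only [zero_pow_eq, mul_ite, mul_one, mul_zero, Finset.sum_ite_eq']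
      split_ifs <;> simp [hb0]
    rw [tsum_mul_zero_pow]
    nlinarith [hP 0 ⟨le_rfl, zero_le_one⟩, ht.1]
  · rw [hBρ]
    nlinarith [hP ρ hρ, ht.2]

lemma tsum_mul_pow_eq_zero_of_tendsto (hb : Summable b) {P R : ℝ → ℝ} (hP : Continuous P)
    {T : ℝ} (hT : T ∈ Icc (-1 : ℝ) 1) (hR : Tendsto R (𝓝[<] 1) (𝓝 T))
    (hRI : ∀ᶠ t in 𝓝[<] 1, R t ∈ Icc (-1 : ℝ) 1)
    (hBR : ∀ᶠ t in 𝓝[<] 1, ∑' j, b j * R t ^ j = (1 - t) * P (R t)) :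
    ∑' j, b j * T ^ j = 0 := by
  have hB : Tendsto (fun t => ∑' j, b j * R t ^ j) (𝓝[<] 1) (𝓝 (∑' j, b j * T ^ j)) :=
    ((continuousOn_tsum_mul_pow hb T hT).tendsto).comp (tendsto_nhdsWithin_iff.2 ⟨hR, hRI⟩)
  have hsub : Tendsto (fun t : ℝ => 1 - t) (𝓝[<] 1) (𝓝 0) := by
    have hcont : Continuous fun t : ℝ => 1 - t := by fun_prop
    simpa using (hcont.tendsto 1).mono_left nhdsWithin_le_nhds
  simpa using tendsto_nhds_unique (hB.congr' hBR) (hsub.mul ((hP.tendsto T).comp hR))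

end PerturbedRoot

theorem stmt_9_general (b : ℕ → ℝ)
    (hb_nonneg : ∀ j, j ≠ 1 → 0 ≤ b j)
    (hb_sum : Summable b)
    (ρ : ℝ) (hρ : IsLeast {u ∈ Set.Icc (0:ℝ) 1 | (∑' j : ℕ, b j * u ^ j) = 0} ρ)
    (S : Finset ℕ)
    (hbS : ∀ k ∈ S, 0 < b k)
    (ρfun : (S → ℝ) → ℝ)
    (hρfun : ∀ v : S → ℝ, (∀ k, v k ∈ Set.Icc (0:ℝ) 1) →
      IsLeast {u ∈ Set.Icc (0:ℝ) 1 |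
        (∑' j : ℕ, if h : j ∈ S then b j * v ⟨j, h⟩ * u ^ j else b j * u ^ j) = 0} (ρfun v))
    (ρc : (S → ℕ) → ℝ) (hρc_nonneg : ∀ l, 0 ≤ ρc l)
    (hρc : ∀ v : S → ℝ, (∀ k, v k ∈ Set.Ico (0:ℝ) 1) →
      HasSum (fun l : S → ℕ => ρc l * ∏ k, v k ^ l k) (ρfun v)) :
    HasSum ρc ρ ∧
    (0 < ρ → (∀ l, 0 ≤ ρ⁻¹ * ρc l) ∧ HasSum (fun l : S → ℕ => ρ⁻¹ * ρc l) 1) := by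
  obtain ⟨⟨hρI, hBρ⟩, hρmin⟩ := hρ
  have hIco : Ico (0 : ℝ) 1 ∈ 𝓝[<] 1 := Ico_mem_nhdsLT zero_lt_one
  have hR : ∀ t ∈ Ico (0 : ℝ) 1, IsLeast {u ∈ Icc (0 : ℝ) 1 |
      ∑' j, b j * u ^ j - (1 - t) * ∑ k ∈ S, b k * u ^ k = 0} (ρfun fun _ => t) := by
    intro t ht
    convert hρfun (fun _ => t) fun _ => ⟨ht.1, ht.2.le⟩ using 1
    refine sep_ext_iff.2 fun u hu => ?_
    rw [← tsum_ite_mem_mul_pow hb_sum S t (abs_le.2 ⟨by linarith [hu.1], hu.2⟩)]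
    simp only [dite_eq_ite]
  have hRρ : ∀ t ∈ Ico (0 : ℝ) 1, (ρfun fun _ => t) ≤ ρ := fun t ht =>
    le_of_isLeast_sub_mul_sum hb_sum (hb_nonneg 0 zero_ne_one) (fun k hk => (hbS k hk).le)
      hρI hBρ ⟨ht.1, ht.2.le⟩ (hR t ht)
  have hser : ∀ t ∈ Ico (0 : ℝ) 1,
      HasSum (fun l : S → ℕ => ρc l * t ^ ∑ k, l k) (ρfun fun _ => t) := fun t ht => by
    simpa [Finset.prod_pow_eq_pow_sum] using hρc _ fun _ => ht
  have hs := summable_of_hasSum_mul_pow_le hρc_nonneg hser hRρ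
  have hlim := tendsto_nhdsLT_one_of_hasSum_mul_pow hρc_nonneg hs hser
  have hTρ : ∑' l, ρc l ≤ ρ := le_of_tendsto hlim (mem_of_superset hIco hRρ)
  have hT : ∑' l, ρc l ∈ Icc (0 : ℝ) 1 := ⟨tsum_nonneg hρc_nonneg, hTρ.trans hρI.2⟩
  have hBT := tsum_mul_pow_eq_zero_of_tendsto hb_sum (P := fun u => ∑ k ∈ S, b k * u ^ k)
    (by fun_prop) (Icc_subset_Icc (by norm_num) le_rfl hT) hlim
    (mem_of_superset hIco fun t ht => Icc_subset_Icc (by norm_num) le_rfl (hR t ht).1.1)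
    (mem_of_superset hIco fun t ht => sub_eq_zero.1 (hR t ht).1.2)
  have hsum : HasSum ρc ρ := le_antisymm hTρ (hρmin ⟨hT, hBT⟩) ▸ hs.hasSum
  refine ⟨hsum, fun hρpos => ⟨fun l => mul_nonneg (inv_nonneg.2 hρpos.le) (hρc_nonneg l), ?_⟩⟩
  simpa [inv_mul_cancel₀ hρpos.ne'] using hsum.mul_left ρ⁻¹

theorem stmt_9 (b : ℕ → ℝ)
    (hb_nonneg : ∀ j, j ≠ 1 → 0 ≤ b j) (hb1 : b 1 < 0)
    (hb_sum : Summable b) (hb_total : ∑' j, b j = 0)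
    (ρ : ℝ) (hρ : IsLeast {u ∈ Set.Icc (0:ℝ) 1 | (∑' j : ℕ, b j * u ^ j) = 0} ρ)
    (S : Finset ℕ) (hS : S.Nonempty) (hS1 : 1 ∉ S)
    (hbS : ∀ k ∈ S, 0 < b k)
    (ρfun : (S → ℝ) → ℝ)
    (hρfun : ∀ v : S → ℝ, (∀ k, v k ∈ Set.Icc (0:ℝ) 1) →
      IsLeast {u ∈ Set.Icc (0:ℝ) 1 |
        (∑' j : ℕ, if h : j ∈ S then b j * v ⟨j, h⟩ * u ^ j else b j * u ^ j) = 0} (ρfun v))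
    (ρc : (S → ℕ) → ℝ) (hρc_nonneg : ∀ l, 0 ≤ ρc l)
    (hρc : ∀ v : S → ℝ, (∀ k, v k ∈ Set.Ico (0:ℝ) 1) →
      HasSum (fun l : S → ℕ => ρc l * ∏ k, v k ^ l k) (ρfun v)) :
    HasSum ρc ρ ∧
    (0 < ρ → (∀ l, 0 ≤ ρ⁻¹ * ρc l) ∧ HasSum (fun l : S → ℕ => ρ⁻¹ * ρc l) 1) :=
  stmt_9_general b hb_nonneg hb_sum ρ hρ S hbS ρfun hρfun ρc hρc_nonneg hρc
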